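/- The deformed bivector P_d equals L_Y(P) + (d√g(γ)⟨γ,M⟩/2)·L_Z(P), where L denotes the Lie derivative of the bivector P along a vector field, Y has components Y^i = 0, Y^{i+3} = −M_i/√g(γ), and Z has components Z^i = 0, Z^{i+3} = ((tr A·Id − A)γ)_i, for i = 1,2,3. -/

import Mathlib

open Matrix Filter

noncomputable section

/-- Index type for the phase space ℝ³×ℝ³: `Sum.inl` indexes γ, `Sum.inr` indexes M. -/
abbrev Idx : Type := Fin 3 ⊕ Fin 3

/-- The phase space ℝ⁶ of the variables (γ, M). -/
abbrev V : Type := Idx → ℝ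

/-- The totally antisymmetric Levi-Civita symbol on `Fin 3` with ε₀₁₂ = 1. -/
def eps (i j k : Fin 3) : ℝ :=
  (((i : ℕ) : ℝ) - ((j : ℕ) : ℝ)) * (((j : ℕ) : ℝ) - ((k : ℕ) : ℝ)) *
    (((k : ℕ) : ℝ) - ((i : ℕ) : ℝ)) / 2

def gI (i : Fin 3) : Idx := Sum.inl i
def mI (i : Fin 3) : Idx := Sum.inr i

/-- The γ-part of a phase point. -/
def gPart (x : V) : Fin 3 → ℝ := fun i => x (gI i)

/-- The M-part of a phase point. -/
def mPart (x : V) : Fin 3 → ℝ := fun i => x (mI i)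

/-- Partial derivative of `f` at `x` in the coordinate direction `a`. -/
def pd (f : V → ℝ) (x : V) (a : Idx) : ℝ := fderiv ℝ f x (Pi.single a 1)

/-- Bracket with structure functions `{M_i,M_j} = Σ_k ε_{ijk}·cM x k`,
`{M_i,γ_j} = Σ_k ε_{ijk}·cG x k`, `{γ_i,γ_j} = 0`, extended to functions
via partial derivatives. -/
def bracket (cM cG : V → Fin 3 → ℝ) (f g : V → ℝ) (x : V) : ℝ :=
  ∑ i : Fin 3, ∑ j : Fin 3, ∑ k : Fin 3, eps i j k *
    (cM x k * pd f x (mI i) * pd g x (mI j)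
      + cG x k * (pd f x (mI i) * pd g x (gI j) + pd f x (gI i) * pd g x (mI j)))

/-- Structure functions of the standard Lie–Poisson bracket on e*(3). -/
def cMstd (x : V) : Fin 3 → ℝ := mPart x

def cGstd (x : V) : Fin 3 → ℝ := gPart x

/-- A = diag(a₁,a₂,a₃). -/
def Amat (a₁ a₂ a₃ : ℝ) : Matrix (Fin 3) (Fin 3) ℝ := Matrix.diagonal ![a₁, a₂, a₃]

/-- g(γ) = (1 − d⟨γ,Aγ⟩)⁻¹. -/
def gfun (a₁ a₂ a₃ d : ℝ) (x : V) : ℝ :=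
  (1 - d * (gPart x ⬝ᵥ (Amat a₁ a₂ a₃).mulVec (gPart x)))⁻¹

/-- √g(γ). -/
def sg (a₁ a₂ a₃ d : ℝ) (x : V) : ℝ := Real.sqrt (gfun a₁ a₂ a₃ d x)

/-- ⟨M, Aγ⟩. -/
def MAg (a₁ a₂ a₃ : ℝ) (x : V) : ℝ := mPart x ⬝ᵥ (Amat a₁ a₂ a₃).mulVec (gPart x)

/-- The antisymmetric matrix of z ∈ ℝ³ with Z₁₂ = z₃, Z₂₃ = z₁, Z₃₁ = z₂. -/
def hatm (z : Fin 3 → ℝ) : Matrix (Fin 3) (Fin 3) ℝ :=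
  !![0, z 2, -z 1; -z 2, 0, z 0; z 1, -z 0, 0]

/-- The Lie–Poisson bivector P on e*(3) in block form (0, Γ; Γ, 𝐌). -/
def Pstd (x : V) : Matrix Idx Idx ℝ :=
  Matrix.fromBlocks 0 (hatm (gPart x)) (hatm (gPart x)) (hatm (mPart x))

/-- The deformed bivector P_d = (1/√g)(0,Γ;Γ,𝐌) − d√g⟨M,Aγ⟩(0,0;0,Γ). -/
def Pdef (a₁ a₂ a₃ d : ℝ) (x : V) : Matrix Idx Idx ℝ :=
  (sg a₁ a₂ a₃ d x)⁻¹ • Pstd x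
    - (d * sg a₁ a₂ a₃ d x * MAg a₁ a₂ a₃ x) •
        Matrix.fromBlocks 0 0 0 (hatm (gPart x))

/-- The Lie derivative of a bivector P along a vector field X:
(L_X P)^{ij} = Σ_k (X^k ∂_k P^{ij} − P^{kj} ∂_k X^i − P^{ik} ∂_k X^j). -/
def lieDer (X : V → V) (P : V → Matrix Idx Idx ℝ) (x : V) (i j : Idx) : ℝ :=
  ∑ k : Idx, (X x k * pd (fun y => P y i j) x k
    - P x k j * pd (fun y => X y i) x k
    - P x i k * pd (fun y => X y j) x k)

/-- The vector field Y with Y^γ = 0, Y^{M_i} = −M_i/√g. -/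
def Yfield (a₁ a₂ a₃ d : ℝ) (x : V) : V :=
  Sum.elim (fun _ => 0) (fun i => -(mPart x i) / sg a₁ a₂ a₃ d x)

/-- The vector field Z with Z^γ = 0, Z^{M_i} = ((tr A·Id − A)γ)_i. -/
def Zfield (a₁ a₂ a₃ : ℝ) (x : V) : V :=
  Sum.elim (fun _ => 0) (fun i => (a₁ + a₂ + a₃ - ![a₁, a₂, a₃] i) * gPart x i)
section Helpers

variable (a₁ a₂ a₃ d : ℝ) (x : V)

/-- 1 − d⟨γ,Aγ⟩ in expanded coordinates. -/
def tf (a₁ a₂ a₃ d : ℝ) (y : V) : ℝ :=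
  1 - d * (a₁ * y (gI 0) ^ 2 + a₂ * y (gI 1) ^ 2 + a₃ * y (gI 2) ^ 2)

lemma q_expand (y : V) :
    gPart y ⬝ᵥ (Amat a₁ a₂ a₃).mulVec (gPart y)
      = a₁ * y (gI 0) ^ 2 + a₂ * y (gI 1) ^ 2 + a₃ * y (gI 2) ^ 2 := by
  simp [dotProduct, Matrix.mulVec, Amat, Matrix.diagonal, Fin.sum_univ_three, gPart,
    Matrix.cons_val_zero, Matrix.cons_val_one, Matrix.head_cons]
  ring

lemma MAg_expand :
    MAg a₁ a₂ a₃ x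
      = a₁ * x (mI 0) * x (gI 0) + a₂ * x (mI 1) * x (gI 1) + a₃ * x (mI 2) * x (gI 2) := by
  simp [MAg, dotProduct, Matrix.mulVec, Amat, Matrix.diagonal, Fin.sum_univ_three, gPart, mPart,
    Matrix.cons_val_zero, Matrix.cons_val_one, Matrix.head_cons]
  ring

lemma gM_expand :
    gPart x ⬝ᵥ mPart x = x (gI 0) * x (mI 0) + x (gI 1) * x (mI 1) + x (gI 2) * x (mI 2) := by
  simp [dotProduct, Fin.sum_univ_three, gPart, mPart]

lemma sg_eq : sg a₁ a₂ a₃ d x = (Real.sqrt (tf a₁ a₂ a₃ d x))⁻¹ := by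
  rw [sg, gfun, q_expand, ← Real.sqrt_inv]; rfl

lemma Y_eq (i : Fin 3) :
    (fun y => Yfield a₁ a₂ a₃ d y (Sum.inr i))
      = fun y => -(y (mI i) * Real.sqrt (tf a₁ a₂ a₃ d y)) := by
  funext y
  simp [Yfield, mPart, sg_eq, div_eq_mul_inv, inv_inv, neg_mul]

lemma pd_eq {f : V → ℝ} {L : V →L[ℝ] ℝ} (h : HasFDerivAt f L x) (k : Idx) :
    pd f x k = L (Pi.single k 1) := by
  rw [pd, h.fderiv]

lemma hasF_coord (a : Idx) :
    HasFDerivAt (fun y : V => y a) (ContinuousLinearMap.proj (R := ℝ) (φ := fun _ : Idx => ℝ) a) x :=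
  (ContinuousLinearMap.proj (R := ℝ) (φ := fun _ : Idx => ℝ) a).hasFDerivAt

lemma pd_coord (a k : Idx) : pd (fun y => y a) x k = (Pi.single k 1 : V) a := by
  rw [pd_eq x (hasF_coord x a)]; rfl

lemma pd_neg_coord (a k : Idx) : pd (fun y => -y a) x k = -(Pi.single k 1 : V) a := by
  rw [pd_eq x (hasF_coord x a).fun_neg]; rfl

lemma pd_zero (k : Idx) : pd (fun _ => (0 : ℝ)) x k = 0 := by
  rw [pd_eq x (hasFDerivAt_const (0:ℝ) x)]; rfl

lemma pd_const_mul_coord (c : ℝ) (a k : Idx) :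
    pd (fun y => c * y a) x k = c * (Pi.single k 1 : V) a := by
  rw [pd_eq x ((hasF_coord x a).const_mul c)]
  simp

end Helpers
section Deriv

variable (a₁ a₂ a₃ d : ℝ) (x : V)

lemma pdY (hx : 0 < tf a₁ a₂ a₃ d x) (i : Fin 3) (k : Idx) :
    pd (fun y => -(y (Sum.inr i) * Real.sqrt (tf a₁ a₂ a₃ d y))) x k
      = -((Pi.single k 1 : V) (Sum.inr i)) * Real.sqrt (tf a₁ a₂ a₃ d x)
        + x (Sum.inr i) * (d * (a₁ * x (Sum.inl 0) * (Pi.single k 1 : V) (Sum.inl 0)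
            + a₂ * x (Sum.inl 1) * (Pi.single k 1 : V) (Sum.inl 1)
            + a₃ * x (Sum.inl 2) * (Pi.single k 1 : V) (Sum.inl 2))
          / Real.sqrt (tf a₁ a₂ a₃ d x)) := by
  have hr : (0:ℝ) < Real.sqrt (tf a₁ a₂ a₃ d x) := Real.sqrt_pos.mpr hx
  have h0 := hasF_coord x (Sum.inl 0 : Idx)
  have h1 := hasF_coord x (Sum.inl 1 : Idx)
  have h2 := hasF_coord x (Sum.inl 2 : Idx)
  have hm := hasF_coord x (Sum.inr i : Idx)
  have hq := (((h0.mul h0).const_mul a₁).add ((h1.mul h1).const_mul a₂)).add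
      ((h2.mul h2).const_mul a₃)
  have ht' := (hq.const_mul d).const_sub 1
  have ht : HasFDerivAt (tf a₁ a₂ a₃ d)
      (-(d • (a₁ • (x (Sum.inl 0 : Idx) • ContinuousLinearMap.proj (R := ℝ) (φ := fun _ : Idx => ℝ) (Sum.inl 0 : Idx)
              + x (Sum.inl 0 : Idx) • ContinuousLinearMap.proj (R := ℝ) (φ := fun _ : Idx => ℝ) (Sum.inl 0 : Idx))
            + a₂ • (x (Sum.inl 1 : Idx) • ContinuousLinearMap.proj (R := ℝ) (φ := fun _ : Idx => ℝ) (Sum.inl 1 : Idx)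
              + x (Sum.inl 1 : Idx) • ContinuousLinearMap.proj (R := ℝ) (φ := fun _ : Idx => ℝ) (Sum.inl 1 : Idx))
            + a₃ • (x (Sum.inl 2 : Idx) • ContinuousLinearMap.proj (R := ℝ) (φ := fun _ : Idx => ℝ) (Sum.inl 2 : Idx)
              + x (Sum.inl 2 : Idx) • ContinuousLinearMap.proj (R := ℝ) (φ := fun _ : Idx => ℝ) (Sum.inl 2 : Idx)))))
      x := by
    have : tf a₁ a₂ a₃ d = fun y : V =>
        1 - d * (a₁ * (y (Sum.inl 0 : Idx) * y (Sum.inl 0 : Idx)) + a₂ * (y (Sum.inl 1 : Idx) * y (Sum.inl 1 : Idx))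
          + a₃ * (y (Sum.inl 2 : Idx) * y (Sum.inl 2 : Idx))) := by
      funext y; simp only [tf, gI]; ring
    rw [this]
    exact ht'
  have hsq : HasFDerivAt (fun y => Real.sqrt (tf a₁ a₂ a₃ d y))
      ((1 / (2 * Real.sqrt (tf a₁ a₂ a₃ d x))) • _) x :=
    (Real.hasDerivAt_sqrt hx.ne').comp_hasFDerivAt x ht
  have hY := ((hm.fun_mul hsq).fun_neg)
  rw [pd_eq x hY]
  simp only [ContinuousLinearMap.neg_apply, ContinuousLinearMap.add_apply,
    ContinuousLinearMap.coe_smul', Pi.smul_apply, ContinuousLinearMap.proj_apply,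
    smul_eq_mul, Pi.neg_apply]
  field_simp
  ring

lemma Y_val (i : Fin 3) :
    Yfield a₁ a₂ a₃ d x (Sum.inr i) = -(x (Sum.inr i) * Real.sqrt (tf a₁ a₂ a₃ d x)) := by
  simp [Yfield, mPart, mI, sg_eq, div_eq_mul_inv, inv_inv, neg_mul]

lemma Z_val (i : Fin 3) :
    Zfield a₁ a₂ a₃ x (Sum.inr i) = (a₁ + a₂ + a₃ - ![a₁, a₂, a₃] i) * x (Sum.inl i) := rfl

lemma Y_val0 (i : Fin 3) : Yfield a₁ a₂ a₃ d x (Sum.inl i) = 0 := rfl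
lemma Z_val0 (i : Fin 3) : Zfield a₁ a₂ a₃ x (Sum.inl i) = 0 := rfl

end Deriv
section Hatm
variable (z : Fin 3 → ℝ)
@[simp] lemma hatm00 : hatm z 0 0 = 0 := rfl
@[simp] lemma hatm01 : hatm z 0 1 = z 2 := rfl
@[simp] lemma hatm02 : hatm z 0 2 = -z 1 := rfl
@[simp] lemma hatm10 : hatm z 1 0 = -z 2 := rfl
@[simp] lemma hatm11 : hatm z 1 1 = 0 := rfl
@[simp] lemma hatm12 : hatm z 1 2 = z 0 := rfl
@[simp] lemma hatm20 : hatm z 2 0 = z 1 := rfl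
@[simp] lemma hatm21 : hatm z 2 1 = -z 0 := rfl
@[simp] lemma hatm22 : hatm z 2 2 = 0 := rfl
end Hatm

set_option maxHeartbeats 2000000 in
/-- P_d = L_Y(P) + (d√g⟨γ,M⟩/2)·L_Z(P). -/
theorem Pdef_as_lie_derivatives (a₁ a₂ a₃ d : ℝ) (x : V)
    (hx : 0 < 1 - d * (gPart x ⬝ᵥ (Amat a₁ a₂ a₃).mulVec (gPart x)))
    (i j : Idx) :
    Pdef a₁ a₂ a₃ d x i j
      = lieDer (Yfield a₁ a₂ a₃ d) Pstd x i j
        + (d * sg a₁ a₂ a₃ d x * (gPart x ⬝ᵥ mPart x) / 2)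
            * lieDer (Zfield a₁ a₂ a₃) Pstd x i j := by
  rw [q_expand] at hx
  have hx' : 0 < tf a₁ a₂ a₃ d x := hx
  have hr : Real.sqrt (tf a₁ a₂ a₃ d x) ≠ 0 := (Real.sqrt_pos.mpr hx').ne'
  have h2 : Real.sqrt (tf a₁ a₂ a₃ d x) ^ 2 = tf a₁ a₂ a₃ d x := Real.sq_sqrt hx'.le
  have hfin : ∀ i : Fin 3, i = 0 ∨ i = 1 ∨ i = 2 := by decide
  obtain i | i := i <;> obtain j | j := j <;> rcases hfin i with rfl | rfl | rfl <;>
    rcases hfin j with rfl | rfl | rfl <;>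
  · simp only [lieDer, Fintype.sum_sum_type, Fin.sum_univ_three, Pdef, Pstd,
      Matrix.sub_apply, Matrix.smul_apply, Matrix.fromBlocks_apply₁₁, Matrix.fromBlocks_apply₁₂,
      Matrix.fromBlocks_apply₂₁, Matrix.fromBlocks_apply₂₂, Matrix.zero_apply,
      hatm00, hatm01, hatm02, hatm10, hatm11, hatm12, hatm20, hatm21, hatm22,
      gPart, mPart, gI, mI, sg_eq, MAg_expand, gM_expand,
      Y_val, Y_val0, Z_val, Z_val0,
      Matrix.cons_val_zero, Matrix.cons_val_one, Matrix.head_cons]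
    simp only [pdY a₁ a₂ a₃ d x hx', pd_coord, pd_neg_coord, pd_zero, pd_const_mul_coord,
      Pi.single_apply, smul_eq_mul]
    simp
    try generalize hg : Real.sqrt (tf a₁ a₂ a₃ d x) = r at h2 hr ⊢
    try rw [← h2]
    try field_simp
    try ring
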